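/- Let Φ be an irreducible root system with simple roots S, I ⊆ S, ⟨I⟩⁺ the positive roots supported on I, and Φ_P⁺ = Φ⁺ \ ⟨I⟩⁺. For every β ∈ Φ_P⁺ there exists a sequence (i_1, ..., i_h) with h = height(β) such that β = α_{i_1} + ... + α_{i_h} and every partial sum α_{i_1} + ... + α_{i_k} (1 ≤ k ≤ h) lies in Φ_P⁺. -/
import Mathlib


open scoped RealInnerProductSpace BigOperators Classical

noncomputable section

abbrev E (r : ℕ) := EuclideanSpace ℝ (Fin r)

/-- An irreducible (crystallographic) root system in Euclidean space `ℝ^r`, with a fixed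
base of simple roots `α 1, …, α r`. -/
structure RootSystemData (r : ℕ) where
  Φ : Finset (E r)
  α : Fin r → E r
  simple_mem : ∀ i, α i ∈ Φ
  indep : LinearIndependent ℝ α
  nonzero : ∀ β ∈ Φ, β ≠ (0 : E r)
  neg_mem : ∀ β ∈ Φ, -β ∈ Φ
  /-- integer coordinates of each root with respect to the simple roots -/
  coords : E r → Fin r → ℤ
  coords_spec : ∀ β ∈ Φ, β = ∑ i, (coords β i : ℝ) • α i
  pos_or_neg : ∀ β ∈ Φ, (∀ i, 0 ≤ coords β i) ∨ (∀ i, coords β i ≤ 0)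
  cryst : ∀ β ∈ Φ, ∀ γ ∈ Φ, ∃ n : ℤ, 2 * ⟪β, γ⟫ / ⟪γ, γ⟫ = (n : ℝ)
  refl_mem : ∀ β ∈ Φ, ∀ γ ∈ Φ, β - (2 * ⟪β, γ⟫ / ⟪γ, γ⟫) • γ ∈ Φ
  irred : ∀ s : Finset (E r), s ⊆ Φ → s.Nonempty →
    (∀ β ∈ s, ∀ γ ∈ Φ, γ ∉ s → ⟪β, γ⟫ = 0) → s = Φ

namespace RootSystemData

variable {r : ℕ} (R : RootSystemData r)

/-- `pairing x β = ⟨x, β^∨⟩ = 2⟨x,β⟩/⟨β,β⟩`. -/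
def pairing (_R : RootSystemData r) (x β : E r) : ℝ := 2 * ⟪x, β⟫ / ⟪β, β⟫

/-- The positive roots `Φ⁺`. -/
def posRoots : Finset (E r) := R.Φ.filter fun β => ∀ i, 0 ≤ R.coords β i

/-- The height of a root. -/
def height (β : E r) : ℤ := ∑ i, R.coords β i

/-- `ρ`, the half-sum of the positive roots. -/
def rho : E r := (2 : ℝ)⁻¹ • ∑ β ∈ R.posRoots, β

/-- `⟨I⟩⁺`, the positive roots supported on the set `I` of simple roots. -/
def suppRoots (I : Finset (Fin r)) : Finset (E r) :=
  R.posRoots.filter fun β => ∀ i, i ∉ I → R.coords β i = 0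

/-- `Φ_P⁺ = Φ⁺ \ ⟨I⟩⁺`. -/
def phiP (I : Finset (Fin r)) : Finset (E r) := R.posRoots \ R.suppRoots I

/-- An integral weight: pairs integrally with every simple coroot. -/
def IsIntegral (lam : E r) : Prop := ∀ i, ∃ n : ℤ, R.pairing lam (R.α i) = (n : ℝ)

/-- A `P`-regular dominant weight: `⟨λ, α^∨⟩ = 0` for `α ∈ I` and `⟨λ, α^∨⟩ > 0`
for simple `α ∉ I`. -/
def IsPRegular (I : Finset (Fin r)) (lam : E r) : Prop :=
  (∀ i ∈ I, R.pairing lam (R.α i) = 0) ∧ (∀ i ∉ I, 0 < R.pairing lam (R.α i))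

end RootSystemData


namespace RootSystemData

variable {r : ℕ} (R : RootSystemData r)

lemma inner_self_pos' {x : E r} (hx : x ∈ R.Φ) : 0 < ⟪x, x⟫ :=
  lt_of_le_of_ne real_inner_self_nonneg
    (fun h => R.nonzero x hx (inner_self_eq_zero.mp h.symm))

lemma coords_eq {x : E r} (hx : x ∈ R.Φ) (c : Fin r → ℤ)
    (h : x = ∑ k, (c k : ℝ) • R.α k) : R.coords x = c := by
  funext k
  have h1 := R.coords_spec x hx
  have h2 : ∑ k, ((R.coords x k - c k : ℤ) : ℝ) • R.α k = 0 := by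
    push_cast
    simp only [sub_smul, Finset.sum_sub_distrib]
    rw [← h1, ← h]; simp
  have h3 := Fintype.linearIndependent_iff.mp R.indep
    (fun k => ((R.coords x k - c k : ℤ) : ℝ)) h2 k
  have h4 : ((R.coords x k - c k : ℤ) : ℝ) = 0 := h3
  have : R.coords x k - c k = 0 := by exact_mod_cast h4
  omega

lemma single_sum (i : Fin r) :
    ∑ k, (if k = i then (1:ℝ) else 0) • R.α k = R.α i := by
  rw [Finset.sum_eq_single i]
  · simp
  · intro b _ hb; simp [hb]
  · intro h; exact absurd (Finset.mem_univ i) h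

lemma coords_alpha (i : Fin r) :
    R.coords (R.α i) = fun k => if k = i then 1 else 0 := by
  apply R.coords_eq (R.simple_mem i)
  push_cast
  rw [R.single_sum i]

lemma inner_eq_sum_right (v x : E r) (c : Fin r → ℤ)
    (h : x = ∑ k, (c k : ℝ) • R.α k) :
    ⟪v, x⟫ = ∑ k, (c k : ℝ) * ⟪v, R.α k⟫ := by
  rw [h, inner_sum]; simp only [real_inner_smul_right]

lemma inner_eq_sum_left (v x : E r) (c : Fin r → ℤ)
    (h : x = ∑ k, (c k : ℝ) • R.α k) :
    ⟪x, v⟫ = ∑ k, (c k : ℝ) * ⟪R.α k, v⟫ := by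
  rw [h, sum_inner]; simp only [real_inner_smul_left]

lemma height_pos {x : E r} (hx : x ∈ R.Φ) (h : ∀ j, 0 ≤ R.coords x j) :
    1 ≤ R.height x := by
  by_contra h'
  push_neg at h'
  have hsum : ∑ j, R.coords x j = 0 :=
    le_antisymm (by unfold height at h'; omega) (Finset.sum_nonneg fun j _ => h j)
  have hall : ∀ j ∈ Finset.univ, R.coords x j = 0 :=
    (Finset.sum_eq_zero_iff_of_nonneg (fun j _ => h j)).mp hsum
  have hx0 : x = 0 := by
    rw [R.coords_spec x hx]
    apply Finset.sum_eq_zero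
    intro j hj; rw [hall j hj]; simp
  exact R.nonzero x hx hx0

lemma sub_mem' {x y : E r} (hx : x ∈ R.Φ) (hy : y ∈ R.Φ)
    (hxy : 0 < ⟪x, y⟫) (hne : x ≠ y) : x - y ∈ R.Φ := by
  obtain ⟨n, hn⟩ := R.cryst x hx y hy
  obtain ⟨m, hm⟩ := R.cryst y hy x hx
  have hxx : 0 < ⟪x, x⟫ := R.inner_self_pos' hx
  have hyy : 0 < ⟪y, y⟫ := R.inner_self_pos' hy
  have hyx : ⟪y, x⟫ = ⟪x, y⟫ := real_inner_comm x y
  have hn' : 2 * ⟪x, y⟫ = (n : ℝ) * ⟪y, y⟫ := by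
    rw [div_eq_iff hyy.ne'] at hn; exact hn
  have hm' : 2 * ⟪x, y⟫ = (m : ℝ) * ⟪x, x⟫ := by
    have hm2 := hm
    rw [div_eq_iff hxx.ne'] at hm2
    rw [← hyx]; exact hm2
  have hnpos : (0:ℝ) < n := by nlinarith
  have hmpos : (0:ℝ) < m := by nlinarith
  have hn1 : 1 ≤ n := by
    have h0 : 0 < n := by exact_mod_cast hnpos
    omega
  have hm1 : 1 ≤ m := by
    have h0 : 0 < m := by exact_mod_cast hmpos
    omega
  have hCS := real_inner_mul_inner_self_le x y
  have hkey : ((n:ℝ) * ⟪y,y⟫) * ((m:ℝ) * ⟪x,x⟫) = (2*⟪x,y⟫) * (2*⟪x,y⟫) := by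
    rw [← hn', ← hm']
  have hprod : (n : ℝ) * m ≤ 4 := by nlinarith [mul_pos hxx hyy]
  have hprod' : n * m ≤ 4 := by exact_mod_cast hprod
  rcases eq_or_lt_of_le hn1 with h1 | h1
  · have h := R.refl_mem x hx y hy
    rw [hn, ← h1] at h
    simpa using h
  rcases eq_or_lt_of_le hm1 with h2 | h2
  · have h := R.refl_mem y hy x hx
    rw [hm, ← h2] at h
    simp only [Int.cast_one, one_smul] at h
    have := R.neg_mem _ h
    simpa [neg_sub] using this
  have hn2 : 2 ≤ n := h1
  have hm2 : 2 ≤ m := h2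
  have hneq : n = 2 := by nlinarith
  have hmeq : m = 2 := by nlinarith
  have e1 : ⟪x, y⟫ = ⟪y, y⟫ := by rw [hneq] at hn'; push_cast at hn'; linarith
  have e2 : ⟪x, y⟫ = ⟪x, x⟫ := by rw [hmeq] at hm'; push_cast at hm'; linarith
  have hz : ⟪x - y, x - y⟫ = 0 := by
    rw [real_inner_sub_sub_self]; linarith
  exact absurd (inner_self_eq_zero.mp hz) (sub_ne_zero.mpr hne)

lemma simple_obtuse {i j : Fin r} (hij : i ≠ j) : ⟪R.α i, R.α j⟫ ≤ 0 := by
  by_contra h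
  push_neg at h
  have hne : R.α i ≠ R.α j := fun hc => hij (R.indep.injective hc)
  have hmem := R.sub_mem' (R.simple_mem i) (R.simple_mem j) h hne
  have hc : R.coords (R.α i - R.α j)
      = fun k => (if k = i then 1 else 0) - (if k = j then 1 else 0) := by
    apply R.coords_eq hmem
    push_cast
    simp only [sub_smul, Finset.sum_sub_distrib]
    rw [R.single_sum i, R.single_sum j]
  rcases R.pos_or_neg _ hmem with hp | hn
  · have := hp j; rw [hc] at this; simp [Ne.symm hij] at this
  · have := hn i; rw [hc] at this; simp [hij] at this


lemma coords_sub_alpha {x : E r} (hx : x ∈ R.Φ) (k : Fin r) (hmem : x - R.α k ∈ R.Φ) :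
    R.coords (x - R.α k) = fun l => R.coords x l - (if l = k then 1 else 0) := by
  apply R.coords_eq hmem
  push_cast
  simp only [sub_smul, Finset.sum_sub_distrib]
  rw [R.single_sum k, ← R.coords_spec x hx]

lemma coords_add_alpha {x : E r} (hx : x ∈ R.Φ) (k : Fin r) (hmem : x + R.α k ∈ R.Φ) :
    R.coords (x + R.α k) = fun l => R.coords x l + (if l = k then 1 else 0) := by
  apply R.coords_eq hmem
  push_cast
  simp only [add_smul, Finset.sum_add_distrib]
  rw [R.single_sum k, ← R.coords_spec x hx]

lemma cs_squeeze {g b s : ℝ} (hs : 0 < s) (hb : 0 < b)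
    (hCS : s * s ≤ g * b) (h1 : g ≤ s) (h2 : b ≤ s) : g = s ∧ b = s := by
  have hg : 0 < g := by nlinarith
  have e2 : s * b ≤ s * s := by nlinarith
  have eq1 : s * b = s * s := le_antisymm e2 (by nlinarith)
  have eqb : b = s := mul_left_cancel₀ hs.ne' eq1
  have eq2 : g * b = s * b := by nlinarith
  have eqg : g = s := mul_right_cancel₀ hb.ne' eq2
  exact ⟨eqg, eqb⟩

lemma claimC (n : ℕ) : ∀ γ : E r, ∀ i : Fin r,
    γ ∈ R.Φ → (∀ j, 0 ≤ R.coords γ j) → (R.height γ).toNat ≤ n →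
    R.coords γ i = 0 → 2 * ⟪γ, R.α i⟫ = -⟪R.α i, R.α i⟫ →
    γ + R.α i ∈ R.Φ →
    (∀ k, k ≠ i → γ + R.α i - R.α k ∉ R.Φ) → False := by
  induction n with
  | zero =>
    intro γ i hγ hcpos hht _ _ _ _
    have h1 := R.height_pos hγ hcpos
    omega
  | succ n IH =>
    intro γ i hγ hcpos hht hci hpair hβ hsub
    have hspec := R.coords_spec γ hγ
    have ha : 0 < ⟪R.α i, R.α i⟫ := R.inner_self_pos' (R.simple_mem i)
    have hγγ : 0 < ⟪γ, γ⟫ := R.inner_self_pos' hγ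
    have hγi : ⟪γ, R.α i⟫ = ∑ k, (R.coords γ k : ℝ) * ⟪R.α k, R.α i⟫ :=
      R.inner_eq_sum_left _ _ _ hspec
    have hγγ' : ⟪γ, γ⟫ = ∑ k, (R.coords γ k : ℝ) * ⟪γ, R.α k⟫ :=
      R.inner_eq_sum_right _ _ _ hspec
    obtain ⟨j, hcj, hγαj⟩ : ∃ j, 0 < R.coords γ j ∧ 0 < ⟪γ, R.α j⟫ := by
      by_contra hall
      push_neg at hall
      have hterms : ∀ k ∈ Finset.univ, (R.coords γ k : ℝ) * ⟪γ, R.α k⟫ ≤ 0 := by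
        intro k _
        rcases lt_or_eq_of_le (hcpos k) with h0 | h0
        · have h1 : ⟪γ, R.α k⟫ ≤ 0 := hall k h0
          have h2 : (0:ℝ) ≤ (R.coords γ k : ℝ) := by exact_mod_cast le_of_lt h0
          exact mul_nonpos_of_nonneg_of_nonpos h2 h1
        · rw [← h0]; simp
      have h3 := Finset.sum_nonpos hterms
      rw [← hγγ'] at h3
      linarith
    have hji : j ≠ i := by
      intro h; rw [h] at hcj; omega
    by_cases hγj : γ = R.α j
    · apply hsub j hji
      rw [hγj]
      have h4 : R.α j + R.α i - R.α j = R.α i := by abel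
      rw [h4]; exact R.simple_mem i
    have hβc : R.coords (γ + R.α i) = fun l => R.coords γ l + (if l = i then 1 else 0) :=
      R.coords_add_alpha hγ i hβ
    have hne_aux : ∀ k, k ≠ i → γ - R.α k ≠ -R.α i := by
      intro k hki heq
      have h5 : γ + R.α i = R.α k := by
        have h6 : γ = R.α k - R.α i := by
          rw [sub_eq_iff_eq_add] at heq
          rw [heq]; abel
        rw [h6]; abel
      have h7 : R.coords (γ + R.α i) i = 1 := by rw [hβc]; simp [hci]
      rw [h5, R.coords_alpha] at h7
      simp [Ne.symm hki] at h7
    have hAk : ∀ k, 0 < R.coords γ k → 0 < ⟪γ, R.α k⟫ →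
        2 * ⟪R.α k, R.α i⟫ ≤ -⟪R.α i, R.α i⟫ := by
      intro k hck hγk
      have hki : k ≠ i := by intro h; rw [h] at hck; omega
      have hγk' : γ ≠ R.α k := by
        intro h
        apply hsub k hki
        rw [h]
        have h8 : R.α k + R.α i - R.α k = R.α i := by abel
        rw [h8]; exact R.simple_mem i
      have hsubk : γ - R.α k ∈ R.Φ := R.sub_mem' hγ (R.simple_mem k) hγk hγk'
      by_contra hlt
      push_neg at hlt
      have hneg : 0 < ⟪γ - R.α k, -R.α i⟫ := by
        rw [inner_neg_right, inner_sub_left]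
        linarith
      have h9 := R.sub_mem' hsubk (R.neg_mem _ (R.simple_mem i)) hneg (hne_aux k hki)
      rw [sub_neg_eq_add] at h9
      apply hsub k hki
      have h10 : γ - R.α k + R.α i = γ + R.α i - R.α k := by abel
      rw [h10] at h9; exact h9
    -- sum analysis at α i
    have hterm : ∀ k ∈ Finset.univ.erase j,
        (R.coords γ k : ℝ) * ⟪R.α k, R.α i⟫ ≤ 0 := by
      intro k _
      by_cases hki : k = i
      · rw [hki, hci]; simp
      · have h2 : (0:ℝ) ≤ (R.coords γ k : ℝ) := by exact_mod_cast hcpos k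
        exact mul_nonpos_of_nonneg_of_nonpos h2 (R.simple_obtuse hki)
    have hsplitT : ⟪γ, R.α i⟫ = (R.coords γ j : ℝ) * ⟪R.α j, R.α i⟫
        + ∑ k ∈ Finset.univ.erase j, (R.coords γ k : ℝ) * ⟪R.α k, R.α i⟫ := by
      rw [hγi, ← Finset.add_sum_erase _ _ (Finset.mem_univ j)]
    have hAj := hAk j hcj hγαj
    have hcj1 : (1:ℝ) ≤ (R.coords γ j : ℝ) := by exact_mod_cast hcj
    have hSnp : ∑ k ∈ Finset.univ.erase j, (R.coords γ k : ℝ) * ⟪R.α k, R.α i⟫ ≤ 0 :=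
      Finset.sum_nonpos hterm
    have hcjxj_le : (R.coords γ j : ℝ) * ⟪R.α j, R.α i⟫ ≤ ⟪R.α j, R.α i⟫ := by
      nlinarith
    have hSzero : ∑ k ∈ Finset.univ.erase j, (R.coords γ k : ℝ) * ⟪R.α k, R.α i⟫ = 0 := by
      linarith
    have hcjxj : (R.coords γ j : ℝ) * ⟪R.α j, R.α i⟫ = -⟪R.α i, R.α i⟫/2 := by
      linarith
    have hxj_eq : ⟪R.α j, R.α i⟫ = -⟪R.α i, R.α i⟫/2 := by linarith
    have hcj_eq1R : (R.coords γ j : ℝ) = 1 := by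
      have h5 : (R.coords γ j : ℝ) * (⟪R.α i, R.α i⟫/2) = 1 * (⟪R.α i, R.α i⟫/2) := by
        rw [hxj_eq] at hcjxj; linarith
      exact mul_right_cancel₀ (by positivity) h5
    have hcjZ : R.coords γ j = 1 := by exact_mod_cast hcj_eq1R
    have hzero_terms := (Finset.sum_eq_zero_iff_of_nonpos hterm).mp hSzero
    have factP : ∀ k, k ≠ j → 0 < R.coords γ k →
        ⟪γ, R.α k⟫ ≤ 0 ∧ ⟪R.α k, R.α i⟫ = 0 := by
      intro k hkj hck
      have hk_in : k ∈ Finset.univ.erase j := Finset.mem_erase.mpr ⟨hkj, Finset.mem_univ k⟩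
      have h0 := hzero_terms k hk_in
      have hck' : (R.coords γ k : ℝ) ≠ 0 := by
        have : (0:ℝ) < (R.coords γ k : ℝ) := by exact_mod_cast hck
        exact this.ne'
      have hxk : ⟪R.α k, R.α i⟫ = 0 := by
        rcases mul_eq_zero.mp h0 with h | h
        · exact absurd h hck'
        · exact h
      refine ⟨?_, hxk⟩
      by_contra hpos
      push_neg at hpos
      have h11 := hAk k hck hpos
      rw [hxk] at h11
      linarith
    -- ⟪γ,γ⟫ ≤ ⟪γ, α j⟫
    have hterm2 : ∀ k ∈ Finset.univ.erase j, (R.coords γ k : ℝ) * ⟪γ, R.α k⟫ ≤ 0 := by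
      intro k hk
      obtain ⟨hkj, -⟩ := Finset.mem_erase.mp hk
      rcases lt_or_eq_of_le (hcpos k) with h0 | h0
      · have h2 : (0:ℝ) ≤ (R.coords γ k : ℝ) := by exact_mod_cast hcpos k
        exact mul_nonpos_of_nonneg_of_nonpos h2 (factP k hkj h0).1
      · rw [← h0]; simp
    have hsplit2 : ⟪γ, γ⟫ = (R.coords γ j : ℝ) * ⟪γ, R.α j⟫
        + ∑ k ∈ Finset.univ.erase j, (R.coords γ k : ℝ) * ⟪γ, R.α k⟫ := by
      rw [hγγ', ← Finset.add_sum_erase _ _ (Finset.mem_univ j)]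
    have hgj_ge : ⟪γ, γ⟫ ≤ ⟪γ, R.α j⟫ := by
      have h12 := Finset.sum_nonpos hterm2
      rw [hcj_eq1R, one_mul] at hsplit2
      linarith
    obtain ⟨m, hm⟩ := R.cryst γ hγ (R.α j) (R.simple_mem j)
    have hb : 0 < ⟪R.α j, R.α j⟫ := R.inner_self_pos' (R.simple_mem j)
    have hm' : 2 * ⟪γ, R.α j⟫ = (m : ℝ) * ⟪R.α j, R.α j⟫ := by
      rw [div_eq_iff hb.ne'] at hm; exact hm
    have hmb : 0 < (m:ℝ) * ⟪R.α j, R.α j⟫ := by linarith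
    have hmpos : (0:ℝ) < m := by
      by_contra h
      push_neg at h
      have h17 := mul_nonpos_of_nonpos_of_nonneg h hb.le
      linarith
    have hm1 : 1 ≤ m := by
      have h0 : 0 < m := by exact_mod_cast hmpos
      omega
    have hγ'mem : γ - R.α j ∈ R.Φ := R.sub_mem' hγ (R.simple_mem j) hγαj hγj
    have hm_eq1 : m = 1 := by
      by_contra hm2'
      have hm2 : 2 ≤ m := by omega
      have hm2R : (2:ℝ) ≤ m := by exact_mod_cast hm2
      have hs_ge_b : ⟪R.α j, R.α j⟫ ≤ ⟪γ, R.α j⟫ := by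
        have h18 := mul_le_mul_of_nonneg_right hm2R hb.le
        linarith
      have hCS := real_inner_mul_inner_self_le γ (R.α j)
      obtain ⟨e1, e2⟩ := cs_squeeze hγαj hb hCS hgj_ge hs_ge_b
      have hz : ⟪γ - R.α j, γ - R.α j⟫ = 0 := by
        rw [real_inner_sub_sub_self]; linarith
      exact R.nonzero _ hγ'mem (inner_self_eq_zero.mp hz)
    have hγ'c : R.coords (γ - R.α j) = fun l => R.coords γ l - (if l = j then 1 else 0) :=
      R.coords_sub_alpha hγ j hγ'mem
    have hγ'pos : ∀ l, 0 ≤ R.coords (γ - R.α j) l := by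
      intro l
      rw [hγ'c]
      by_cases hlj : l = j
      · simp [hlj, hcjZ]
      · simp [hlj]; exact hcpos l
    have hγ'ht : R.height (γ - R.α j) = R.height γ - 1 := by
      unfold height
      rw [hγ'c]
      rw [Finset.sum_sub_distrib]
      congr 1
      rw [Finset.sum_ite_eq' Finset.univ j (fun _ => (1:ℤ))]
      simp
    have hγ'ht' : (R.height (γ - R.α j)).toNat ≤ n := by
      have h13 := R.height_pos hγ'mem hγ'pos
      omega
    have hpair' : 2 * ⟪γ - R.α j, R.α j⟫ = -⟪R.α j, R.α j⟫ := by
      rw [inner_sub_left]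
      rw [hm_eq1] at hm'
      push_cast at hm'
      linarith
    have hadd : γ - R.α j + R.α j = γ := by abel
    have hsub' : ∀ k, k ≠ j → γ - R.α j + R.α j - R.α k ∉ R.Φ := by
      intro k hkj hmem
      have h14 : γ - R.α j + R.α j - R.α k = γ - R.α k := by abel
      rw [h14] at hmem
      have hck : R.coords (γ - R.α k) = fun l => R.coords γ l - (if l = k then 1 else 0) :=
        R.coords_sub_alpha hγ k hmem
      have hckpos : 0 < R.coords γ k := by
        rcases R.pos_or_neg _ hmem with hp | hn
        · have h15 := hp k
          rw [hck] at h15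
          simp at h15
          omega
        · have h15 := hn j
          rw [hck] at h15
          simp [Ne.symm hkj] at h15
          omega
      by_cases hki : k = i
      · rw [hki] at hckpos; omega
      · have hxk0 := (factP k hkj hckpos).2
        have hneg : 0 < ⟪γ - R.α k, -R.α i⟫ := by
          rw [inner_neg_right, inner_sub_left, hxk0]
          linarith
        have hadd2 := R.sub_mem' hmem (R.neg_mem _ (R.simple_mem i)) hneg (hne_aux k hki)
        rw [sub_neg_eq_add] at hadd2
        apply hsub k hki
        have h16 : γ - R.α k + R.α i = γ + R.α i - R.α k := by abel
        rw [h16] at hadd2; exact hadd2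
    exact IH (γ - R.α j) j hγ'mem hγ'pos hγ'ht'
      (by rw [hγ'c]; simp [hcjZ]) hpair' (by rw [hadd]; exact hγ) hsub'


lemma exists_pos_inner {x : E r} (hx : x ∈ R.Φ) (hpos : ∀ j, 0 ≤ R.coords x j) :
    ∃ j, 0 < R.coords x j ∧ 0 < ⟪x, R.α j⟫ := by
  have hxx : 0 < ⟪x, x⟫ := R.inner_self_pos' hx
  have hxx' : ⟪x, x⟫ = ∑ k, (R.coords x k : ℝ) * ⟪x, R.α k⟫ :=
    R.inner_eq_sum_right _ _ _ (R.coords_spec x hx)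
  by_contra hall
  push_neg at hall
  have hterms : ∀ k ∈ Finset.univ, (R.coords x k : ℝ) * ⟪x, R.α k⟫ ≤ 0 := by
    intro k _
    rcases lt_or_eq_of_le (hpos k) with h0 | h0
    · have h1 : ⟪x, R.α k⟫ ≤ 0 := hall k h0
      have h2 : (0:ℝ) ≤ (R.coords x k : ℝ) := by exact_mod_cast le_of_lt h0
      exact mul_nonpos_of_nonneg_of_nonpos h2 h1
    · rw [← h0]; simp
  have h3 := Finset.sum_nonpos hterms
  rw [← hxx'] at h3
  linarith

lemma height_sub_alpha {x : E r} (hx : x ∈ R.Φ) (k : Fin r) (hmem : x - R.α k ∈ R.Φ) :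
    R.height (x - R.α k) = R.height x - 1 := by
  unfold height
  rw [R.coords_sub_alpha hx k hmem, Finset.sum_sub_distrib]
  congr 1
  rw [Finset.sum_ite_eq' Finset.univ k (fun _ => (1:ℤ))]
  simp

lemma exists_step {I : Finset (Fin r)} {β : E r} (hβ : β ∈ R.Φ)
    (hpos : ∀ j, 0 ≤ R.coords β j) (hout : ∃ l, l ∉ I ∧ R.coords β l ≠ 0)
    (hht : 2 ≤ R.height β) :
    ∃ k, β - R.α k ∈ R.Φ ∧ (∀ j, 0 ≤ R.coords (β - R.α k) j) ∧
      ∃ l, l ∉ I ∧ R.coords (β - R.α k) l ≠ 0 := by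
  by_contra hcon
  push_neg at hcon
  have hnn : ∀ k, β - R.α k ∈ R.Φ → ∀ j, 0 ≤ R.coords (β - R.α k) j := by
    intro k hmem j
    have hck := R.coords_sub_alpha hβ k hmem
    rcases R.pos_or_neg _ hmem with hp | hn
    · exact hp j
    · exfalso
      have hlez : ∀ l, R.coords β l ≤ (if l = k then 1 else 0) := by
        intro l
        have h1 := hn l
        rw [hck] at h1
        simp only at h1
        omega
      have hsum : R.height β ≤ 1 := by
        unfold height
        calc ∑ l, R.coords β l ≤ ∑ l, (if l = k then 1 else 0) :=
              Finset.sum_le_sum (fun l _ => hlez l)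
          _ = 1 := by
              rw [Finset.sum_ite_eq' Finset.univ k (fun _ => (1:ℤ))]; simp
      omega
  have hcon' : ∀ k, β - R.α k ∈ R.Φ → ∀ l, l ∉ I → R.coords (β - R.α k) l = 0 := by
    intro k hmem l hl
    exact hcon k hmem (hnn k hmem) l hl
  obtain ⟨i, hci, hβi⟩ := R.exists_pos_inner hβ hpos
  have hβne : β ≠ R.α i := by
    intro h
    have h1 : R.height β = 1 := by
      rw [h]
      unfold height
      rw [R.coords_alpha, Finset.sum_ite_eq' Finset.univ i (fun _ => (1:ℤ))]
      simp
    omega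
  have hγmem : β - R.α i ∈ R.Φ := R.sub_mem' hβ (R.simple_mem i) hβi hβne
  have hγc := R.coords_sub_alpha hβ i hγmem
  have hγsupp : ∀ l, l ∉ I → R.coords (β - R.α i) l = 0 := hcon' i hγmem
  obtain ⟨l, hlI, hl⟩ := hout
  have hli : l = i := by
    by_contra h
    have h1 := hγsupp l hlI
    rw [hγc] at h1
    simp [h] at h1
    exact hl h1
  subst hli
  have hiI : l ∉ I := hlI
  have hci1 : R.coords β l = 1 := by
    have h1 := hγsupp l hiI
    rw [hγc] at h1
    simp at h1
    omega
  obtain ⟨n, hn⟩ := R.cryst β hβ (R.α l) (R.simple_mem l)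
  have ha : 0 < ⟪R.α l, R.α l⟫ := R.inner_self_pos' (R.simple_mem l)
  have hn' : 2 * ⟪β, R.α l⟫ = (n:ℝ) * ⟪R.α l, R.α l⟫ := by
    rw [div_eq_iff ha.ne'] at hn; exact hn
  have hnb : 0 < (n:ℝ) * ⟪R.α l, R.α l⟫ := by linarith
  have hnpos : (0:ℝ) < n := by
    by_contra h
    push_neg at h
    have h17 := mul_nonpos_of_nonpos_of_nonneg h ha.le
    linarith
  have hn1 : 1 ≤ n := by
    have h0 : 0 < n := by exact_mod_cast hnpos
    omega
  have hrefl := R.refl_mem β hβ (R.α l) (R.simple_mem l)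
  rw [hn] at hrefl
  have hneq1 : n = 1 := by
    by_contra h
    have hn2 : 2 ≤ n := by omega
    have hc2 : R.coords (β - (n:ℝ) • R.α l)
        = fun l2 => R.coords β l2 - n * (if l2 = l then 1 else 0) := by
      apply R.coords_eq hrefl
      push_cast
      simp only [sub_smul, Finset.sum_sub_distrib]
      congr 1
      · exact R.coords_spec β hβ
      · rw [Finset.sum_eq_single l]
        · simp
        · intro b _ hb; simp [hb]
        · intro hb; exact absurd (Finset.mem_univ l) hb
    rcases R.pos_or_neg _ hrefl with hp | hneg
    · have h1 := hp l
      rw [hc2] at h1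
      simp [hci1] at h1
      omega
    · have hz : ∀ l2, l2 ≠ l → R.coords β l2 = 0 := by
        intro l2 hl2
        have h1 := hneg l2
        rw [hc2] at h1
        simp [hl2] at h1
        have h2 := hpos l2
        omega
      have hh : R.height β = 1 := by
        unfold height
        rw [Finset.sum_eq_single l]
        · exact hci1
        · intro b _ hb; exact hz b hb
        · intro hb; exact absurd (Finset.mem_univ l) hb
      omega
  refine R.claimC ((R.height (β - R.α l)).toNat) (β - R.α l) l hγmem (hnn l hγmem) le_rfl
    ?_ ?_ ?_ ?_
  · rw [hγc]; simp [hci1]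
  · rw [inner_sub_left]
    rw [hneq1] at hn'
    push_cast at hn'
    linarith
  · have h1 : β - R.α l + R.α l = β := by abel
    rw [h1]; exact hβ
  · intro k hki hmem
    have h14 : β - R.α l + R.α l - R.α k = β - R.α k := by abel
    rw [h14] at hmem
    have hsupp2 := hcon' k hmem l hiI
    have hckk := R.coords_sub_alpha hβ k hmem
    rw [hckk] at hsupp2
    simp [Ne.symm hki] at hsupp2
    omega


lemma mem_phiP {I : Finset (Fin r)} {β : E r} (hβ : β ∈ R.Φ)
    (hpos : ∀ j, 0 ≤ R.coords β j) (hout : ∃ l, l ∉ I ∧ R.coords β l ≠ 0) :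
    β ∈ R.posRoots \ (R.posRoots.filter fun b => ∀ i, i ∉ I → R.coords b i = 0) := by
  rw [Finset.mem_sdiff]
  constructor
  · rw [posRoots, Finset.mem_filter]; exact ⟨hβ, hpos⟩
  · rw [Finset.mem_filter]
    push_neg
    intro _
    obtain ⟨l, h1, h2⟩ := hout
    exact ⟨l, h1, h2⟩

lemma chain (I : Finset (Fin r)) : ∀ n : ℕ, ∀ β : E r, β ∈ R.Φ →
    (∀ j, 0 ≤ R.coords β j) → (∃ l, l ∉ I ∧ R.coords β l ≠ 0) →
    (R.height β).toNat = n →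
    ∃ f : ℕ → Fin r, β = ∑ j ∈ Finset.range n, R.α (f j) ∧
      ∀ m, 1 ≤ m → m ≤ n →
        (∑ j ∈ Finset.range m, R.α (f j)) ∈
          R.posRoots \ (R.posRoots.filter fun b => ∀ i, i ∉ I → R.coords b i = 0) := by
  intro n
  induction n with
  | zero =>
    intro β hβ hpos hout hht
    have h1 := R.height_pos hβ hpos
    omega
  | succ n IH =>
    intro β hβ hpos hout hht
    have hβphi := R.mem_phiP hβ hpos hout
    have hht1 := R.height_pos hβ hpos
    by_cases hn0 : n = 0
    · subst hn0
      have hh1 : R.height β = 1 := by omega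
      obtain ⟨l, hlI, hl⟩ := hout
      have hl1 : 1 ≤ R.coords β l := by
        have := hpos l; omega
      have hsum : ∑ k2, R.coords β k2 = 1 := hh1
      have hsplit := Finset.add_sum_erase Finset.univ (fun k2 => R.coords β k2)
        (Finset.mem_univ l)
      have herasenn : 0 ≤ ∑ k2 ∈ Finset.univ.erase l, R.coords β k2 :=
        Finset.sum_nonneg (fun k2 _ => hpos k2)
      have hcl1 : R.coords β l = 1 := by omega
      have herase0 : ∑ k2 ∈ Finset.univ.erase l, R.coords β k2 = 0 := by omega
      have hzero := (Finset.sum_eq_zero_iff_of_nonneg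
        (fun k2 _ => hpos k2)).mp herase0
      have hβeq : β = R.α l := by
        rw [R.coords_spec β hβ, Finset.sum_eq_single l]
        · rw [hcl1]; simp
        · intro b _ hb
          have : R.coords β b = 0 :=
            hzero b (Finset.mem_erase.mpr ⟨hb, Finset.mem_univ b⟩)
          rw [this]; simp
        · intro hb; exact absurd (Finset.mem_univ l) hb
      refine ⟨fun _ => l, ?_, ?_⟩
      · rw [Finset.sum_range_one, hβeq]
      · intro m h1 h2
        have hm1 : m = 1 := by omega
        subst hm1
        rw [Finset.sum_range_one, ← hβeq]
        exact hβphi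
    · have hht2 : 2 ≤ R.height β := by omega
      obtain ⟨k, hmem, hknn, hkout⟩ := R.exists_step hβ hpos hout hht2
      have hkht : R.height (β - R.α k) = R.height β - 1 := R.height_sub_alpha hβ k hmem
      have hkht' : (R.height (β - R.α k)).toNat = n := by omega
      obtain ⟨f, hfeq, hfmem⟩ := IH (β - R.α k) hmem hknn hkout hkht'
      have hfull : ∑ j ∈ Finset.range (n+1), R.α (if j < n then f j else k) = β := by
        rw [Finset.sum_range_succ]
        have he : ∑ j ∈ Finset.range n, R.α (if j < n then f j else k)
            = ∑ j ∈ Finset.range n, R.α (f j) :=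
          Finset.sum_congr rfl (fun j hj => by rw [if_pos (Finset.mem_range.mp hj)])
        rw [he, ← hfeq, if_neg (lt_irrefl n)]
        abel
      refine ⟨fun j => if j < n then f j else k, hfull.symm, ?_⟩
      intro m h1 h2
      rcases lt_or_eq_of_le h2 with h3 | h3
      · have hm : m ≤ n := by omega
        have he : ∑ j ∈ Finset.range m, R.α (if j < n then f j else k)
            = ∑ j ∈ Finset.range m, R.α (f j) :=
          Finset.sum_congr rfl (fun j hj => by
            rw [if_pos (lt_of_lt_of_le (Finset.mem_range.mp hj) hm)])
        rw [he]
        exact hfmem m h1 hm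
      · rw [h3, hfull]
        exact hβphi

end RootSystemData

/-- Every `β ∈ Φ_P⁺` can be written as a sum of simple roots such that all partial sums
lie in `Φ_P⁺`. -/
theorem stmt2 {r : ℕ} (R : RootSystemData r) (I : Finset (Fin r))
    (β : E r) (hβ : β ∈ R.phiP I) :
    ∃ seq : Fin (R.height β).toNat → Fin r,
      β = ∑ j, R.α (seq j) ∧
      ∀ k : Fin (R.height β).toNat,
        (∑ j ∈ Finset.Iic k, R.α (seq j)) ∈ R.phiP I := by
  have hβ' : β ∈ R.posRoots \ (R.posRoots.filter fun b => ∀ i, i ∉ I → R.coords b i = 0) := hβ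
  rw [Finset.mem_sdiff] at hβ'
  obtain ⟨hpR, hnot⟩ := hβ'
  rw [RootSystemData.posRoots, Finset.mem_filter] at hpR
  obtain ⟨hβΦ, hpos⟩ := hpR
  have hout : ∃ l, l ∉ I ∧ R.coords β l ≠ 0 := by
    by_contra h
    push_neg at h
    apply hnot
    rw [Finset.mem_filter]
    exact ⟨Finset.mem_filter.mpr ⟨hβΦ, hpos⟩, fun i hi => h i hi⟩
  obtain ⟨f, hfeq, hfmem⟩ := R.chain I (R.height β).toNat β hβΦ hpos hout rfl
  refine ⟨fun j => f j.val, ?_, ?_⟩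
  · rw [Fin.sum_univ_eq_sum_range (fun j => R.α (f j))]
    exact hfeq
  · intro k
    have hIic : ∑ j ∈ Finset.range (k.val + 1), R.α (f j)
        = ∑ j ∈ Finset.Iic k, R.α (f j.val) := by
      have hr : Finset.range (k.val + 1) = Finset.Iic k.val := by
        ext x; simp [Nat.lt_succ_iff]
      rw [hr, ← Fin.map_valEmbedding_Iic, Finset.sum_map]
      simp
    rw [← hIic]
    exact hfmem (k.val + 1) (by omega) (by have := k.isLt; omega)
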